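/- Let μ be a probability measure on [0,1] and b ≥ 2 an integer. If for every nonzero integer h, Σ_{N=1}^{∞} N^{−3} Σ_{u=1}^{N} Σ_{v=1}^{N} |μ̂(h(b^v − b^u))| < ∞, then for μ-almost every x, the sequence (b^n x)_{n≥1} is uniformly distributed modulo 1 (hence x is normal to base b). -/

import Mathlib

open Filter MeasureTheory

/-- A real sequence is uniformly distributed modulo 1, via Weyl's criterion. -/
def UnifDistMod1 (s : ℕ → ℝ) : Prop :=
  ∀ h : ℤ, h ≠ 0 →
    Tendsto (fun N : ℕ => (1 / (N : ℂ)) *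
      ∑ n ∈ Finset.Icc 1 N, Complex.exp (2 * Real.pi * Complex.I * h * s n))
      atTop (nhds 0)

/-- Normality to base `b` via Wall's characterization. -/
def NormalToBase (b : ℕ) (x : ℝ) : Prop :=
  UnifDistMod1 (fun n => x * (b : ℝ) ^ n)

/-!
For fixed `h ≠ 0` put `S_N(x) = ∑_{n ≤ N} e(h bⁿ x)` with `e(t) = exp(2πit)`. Expanding `|S_N|²`
bounds `∫ |S_N|² dμ` by the double sum of `|μ̂(h(bᵛ - bᵘ))|`, so the hypothesis makes
`∑ N⁻³ ∫ |S_N|² dμ` finite and hence `∑ N⁻³ |S_N(x)|²` converges for `μ`-almost every `x`.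
Since `N ↦ S_N(x)` is `1`-Lipschitz, a single `N` with `|S_N(x)| ≥ εN` would make the block of
terms `N ≤ M ≤ N + εN/2` contribute at least `ε³/64` to this series; so `S_N(x) = o(N)`, which is
Weyl's criterion for the frequency `h`.
-/

open Finset Complex Real Topology

section LipschitzSequence

variable {E : Type*} [SeminormedAddCommGroup E] {g : ℕ → E}

lemma LipschitzWith.le_sum_norm_sq_div_cube_of_mul_le_norm (hg : LipschitzWith 1 g) {ε : ℝ}
    (hε : 0 < ε) (hε1 : ε ≤ 1) {N : ℕ} (hN : 0 < N) (hgN : ε * N ≤ ‖g N‖) :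
    ε ^ 3 / 64 ≤ ∑ k ∈ range (⌊ε * N / 2⌋₊ + 1), ‖g (N + k)‖ ^ 2 / ((N + k : ℕ) : ℝ) ^ 3 := by
  set K := ⌊ε * N / 2⌋₊
  have hNpos : (0 : ℝ) < N := by exact_mod_cast hN
  have hKle : (K : ℝ) ≤ ε * N / 2 := Nat.floor_le (by positivity)
  have hKlt : ε * N / 2 < K + 1 := Nat.lt_floor_add_one _
  have hterm : ∀ k ∈ range (K + 1), ε ^ 2 / (32 * N) ≤ ‖g (N + k)‖ ^ 2 / ((N + k : ℕ) : ℝ) ^ 3 := by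
    intro k hk
    have hk : (k : ℝ) ≤ K := by exact_mod_cast Nat.lt_succ_iff.mp (mem_range.mp hk)
    have hdist : ‖g N‖ ≤ ‖g (N + k)‖ + k :=
      norm_le_norm_add_const_of_dist_le (by simpa [Nat.dist_eq] using hg.dist_le_mul N (N + k))
    have hlow : ε * N / 2 ≤ ‖g (N + k)‖ := by linarith
    have hup : ((N + k : ℕ) : ℝ) ≤ 2 * N := by push_cast; nlinarith
    calc ε ^ 2 / (32 * N) = (ε * N / 2) ^ 2 / (2 * N) ^ 3 := by field_simp; ring
      _ ≤ ‖g (N + k)‖ ^ 2 / ((N + k : ℕ) : ℝ) ^ 3 := by gcongr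
  calc ε ^ 3 / 64 ≤ (K + 1) * (ε ^ 2 / (32 * N)) := by
        rw [show ε ^ 3 / 64 = ε * N / 2 * (ε ^ 2 / (32 * N)) by field_simp; ring]
        gcongr
    _ ≤ ∑ k ∈ range (K + 1), ‖g (N + k)‖ ^ 2 / ((N + k : ℕ) : ℝ) ^ 3 := by
        simpa using card_nsmul_le_sum _ _ _ hterm

theorem LipschitzWith.tendsto_norm_div_atTop_zero (hg : LipschitzWith 1 g)
    (hs : Summable fun N : ℕ => ‖g N‖ ^ 2 / (N : ℝ) ^ 3) :
    Tendsto (fun N : ℕ => ‖g N‖ / N) atTop (𝓝 0) := by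
  have htail := tendsto_sum_nat_add fun N : ℕ => ‖g N‖ ^ 2 / (N : ℝ) ^ 3
  refine tendsto_order.2 ⟨fun a ha => Eventually.of_forall fun N => ha.trans_le (by positivity),
    fun a ha => ?_⟩
  set ε := min a 1
  have hε : 0 < ε := lt_min ha one_pos
  filter_upwards [htail.eventually (gt_mem_nhds (by positivity : (0 : ℝ) < ε ^ 3 / 64)),
    eventually_gt_atTop 0] with N hN hNpos
  have hNpos' : (0 : ℝ) < N := by exact_mod_cast hNpos
  suffices ‖g N‖ < ε * N from
    (div_lt_iff₀ hNpos').2 (this.trans_le (by gcongr; exact min_le_left _ _))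
  by_contra! hgN
  have hblock := hg.le_sum_norm_sq_div_cube_of_mul_le_norm hε (min_le_right _ _) hNpos hgN
  have hle : ∑ k ∈ range (⌊ε * N / 2⌋₊ + 1), ‖g (N + k)‖ ^ 2 / ((N + k : ℕ) : ℝ) ^ 3 ≤
      ∑' k, ‖g (k + N)‖ ^ 2 / ((k + N : ℕ) : ℝ) ^ 3 := by
    simp only [add_comm N]
    exact ((summable_nat_add_iff N).2 hs).sum_le_tsum _ fun _ _ => by positivity
  linarith

lemma lipschitzWith_one_sum_Icc {a : ℕ → E} (ha : ∀ n, ‖a n‖ ≤ 1) :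
    LipschitzWith 1 fun N => ∑ n ∈ Icc 1 N, a n := by
  refine LipschitzWith.mk_one fun N M => ?_
  wlog hNM : N ≤ M generalizing N M
  · rw [dist_comm, dist_comm N]; exact this M N (le_of_not_ge hNM)
  calc dist (∑ n ∈ Icc 1 N, a n) (∑ n ∈ Icc 1 M, a n)
      ≤ ∑ i ∈ Ico N M, dist (∑ n ∈ Icc 1 i, a n) (∑ n ∈ Icc 1 (i + 1), a n) :=
        dist_le_Ico_sum_dist (fun N => ∑ n ∈ Icc 1 N, a n) hNM
    _ ≤ ∑ i ∈ Ico N M, 1 := by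
        gcongr with i
        rw [sum_Icc_succ_top (by omega), dist_eq_norm]
        simpa using ha (i + 1)
    _ = dist N M := by
        rw [sum_const, Nat.card_Ico, nsmul_one, Nat.cast_sub hNM, Nat.dist_eq, abs_sub_comm,
          abs_of_nonneg (by simpa using hNM)]

end LipschitzSequence

theorem ae_summable_norm_of_summable_integral_norm {X F : Type*} [MeasurableSpace X]
    [NormedAddCommGroup F] {μ : Measure X} {f : ℕ → X → F} (hf : ∀ n, Integrable (f n) μ)
    (hs : Summable fun n => ∫ x, ‖f n x‖ ∂μ) : ∀ᵐ x ∂μ, Summable fun n => ‖f n x‖ := by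
  refine summable_norm_of_tsum_eLpNorm_ne_top (p := 1) le_rfl (fun n => (hf n).1) ?_
  simp_rw [eLpNorm_one_eq_lintegral_enorm, ← ofReal_integral_norm_eq_lintegral_enorm (hf _)]
  rw [← ENNReal.ofReal_tsum_of_nonneg (fun n => integral_nonneg fun _ => norm_nonneg _) hs]
  exact ENNReal.ofReal_ne_top

theorem integral_norm_sum_sq_le {ι X 𝕜 : Type*} [RCLike 𝕜] [MeasurableSpace X] {μ : Measure X}
    (s : Finset ι) (f : ι → X → 𝕜)
    (hf : ∀ i ∈ s, ∀ j ∈ s, Integrable (fun x => starRingEnd 𝕜 (f i x) * f j x) μ) :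
    ∫ x, ‖∑ i ∈ s, f i x‖ ^ 2 ∂μ ≤
      ∑ i ∈ s, ∑ j ∈ s, ‖∫ x, starRingEnd 𝕜 (f i x) * f j x ∂μ‖ := by
  have hpt : ∀ x, ((‖∑ i ∈ s, f i x‖ ^ 2 : ℝ) : 𝕜) =
      ∑ i ∈ s, ∑ j ∈ s, starRingEnd 𝕜 (f i x) * f j x := fun x => by
    rw [RCLike.ofReal_pow, ← RCLike.conj_mul, map_sum, sum_mul_sum]
  have hint : ∀ i ∈ s, Integrable (fun x => ∑ j ∈ s, starRingEnd 𝕜 (f i x) * f j x) μ :=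
    fun i hi => integrable_finsetSum _ (hf i hi)
  calc ∫ x, ‖∑ i ∈ s, f i x‖ ^ 2 ∂μ
      = RCLike.re (∫ x, ∑ i ∈ s, ∑ j ∈ s, starRingEnd 𝕜 (f i x) * f j x ∂μ) := by
        rw [← integral_re (integrable_finsetSum _ hint)]
        simp_rw [← hpt, RCLike.ofReal_re]
    _ = RCLike.re (∑ i ∈ s, ∑ j ∈ s, ∫ x, starRingEnd 𝕜 (f i x) * f j x ∂μ) := by
        rw [integral_finsetSum _ hint]
        exact congrArg _ (sum_congr rfl fun i hi => integral_finsetSum _ (hf i hi))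
    _ ≤ ‖∑ i ∈ s, ∑ j ∈ s, ∫ x, starRingEnd 𝕜 (f i x) * f j x ∂μ‖ := RCLike.re_le_norm _
    _ ≤ ∑ i ∈ s, ∑ j ∈ s, ‖∫ x, starRingEnd 𝕜 (f i x) * f j x ∂μ‖ :=
        (norm_sum_le _ _).trans (sum_le_sum fun _ _ => norm_sum_le _ _)

lemma norm_exp_two_pi_I_mul_ofReal (t : ℝ) : ‖cexp (2 * π * I * t)‖ = 1 := by
  simpa [mul_comm, mul_left_comm, mul_assoc] using norm_exp_ofReal_mul_I (2 * π * t)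

lemma conj_exp_two_pi_I_mul_ofReal_mul (s t : ℝ) :
    starRingEnd ℂ (cexp (2 * π * I * s)) * cexp (2 * π * I * t) =
      cexp (2 * π * I * (t - s : ℝ)) := by
  rw [← Complex.exp_conj, ← Complex.exp_add]
  simp only [map_mul, conj_I, conj_ofReal, map_ofNat]
  push_cast; ring_nf

theorem ae_tendsto_weyl_average_of_summable {X : Type*} [MeasurableSpace X] (μ : Measure X)
    [IsFiniteMeasure μ] {φ : ℕ → X → ℝ} (hφ : ∀ n, Measurable (φ n))
    (hsum : Summable fun N : ℕ => (N : ℝ) ^ (-(3 : ℤ)) *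
      ∑ u ∈ Icc 1 N, ∑ v ∈ Icc 1 N, ‖∫ x, cexp (2 * π * I * (φ v x - φ u x : ℝ)) ∂μ‖) :
    ∀ᵐ x ∂μ, Tendsto (fun N : ℕ => (1 / (N : ℂ)) * ∑ n ∈ Icc 1 N, cexp (2 * π * I * φ n x))
      atTop (𝓝 0) := by
  set S : ℕ → X → ℂ := fun N x => ∑ n ∈ Icc 1 N, cexp (2 * π * I * φ n x)
  have hS_le : ∀ N x, ‖S N x‖ ≤ N := fun N x =>
    (norm_sum_le _ _).trans (by simp [norm_exp_two_pi_I_mul_ofReal])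
  have hvar : ∀ N, ∫ x, ‖S N x‖ ^ 2 ∂μ ≤
      ∑ u ∈ Icc 1 N, ∑ v ∈ Icc 1 N, ‖∫ x, cexp (2 * π * I * (φ v x - φ u x : ℝ)) ∂μ‖ := by
    intro N
    simp_rw [S, ← conj_exp_two_pi_I_mul_ofReal_mul]
    refine integral_norm_sum_sq_le _ _ fun u _ v _ => Integrable.of_bound (by fun_prop) 1 ?_
    refine ae_of_all _ fun x => ?_
    simp [norm_exp_two_pi_I_mul_ofReal]
  have hint : ∀ N : ℕ, Integrable (fun x => (N : ℝ) ^ (-(3 : ℤ)) * ‖S N x‖ ^ 2) μ := fun N =>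
    (Integrable.of_bound (by fun_prop) ((N : ℝ) ^ 2) (ae_of_all _ fun x => by
      simpa using pow_le_pow_left₀ (norm_nonneg _) (hS_le N x) 2)).const_mul _
  have hae := ae_summable_norm_of_summable_integral_norm hint <|
    hsum.of_nonneg_of_le (fun N => integral_nonneg fun _ => norm_nonneg _) fun N => by
      simp_rw [norm_mul, norm_pow, norm_norm, norm_zpow, Real.norm_natCast]
      rw [integral_const_mul]
      gcongr
      exact hvar N
  filter_upwards [hae] with x hx
  have hlip : LipschitzWith 1 fun N => S N x :=
    lipschitzWith_one_sum_Icc fun n => (norm_exp_two_pi_I_mul_ofReal _).le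
  rw [tendsto_zero_iff_norm_tendsto_zero]
  refine (hlip.tendsto_norm_div_atTop_zero (hx.congr fun N => ?_)).congr fun N => ?_
  · simp [div_eq_inv_mul]
  · simp [S, div_eq_inv_mul]

theorem davenport_erdos_leveque_general (μ : Measure ℝ) [IsProbabilityMeasure μ]
    (b : ℕ)
    (hsum : ∀ h : ℤ, h ≠ 0 →
      Summable (fun N : ℕ => (N : ℝ) ^ (-(3 : ℤ)) *
        ∑ u ∈ Finset.Icc 1 N, ∑ v ∈ Finset.Icc 1 N,
          ‖(∫ x : ℝ, Complex.exp
            (2 * Real.pi * Complex.I * (h * ((b : ℤ) ^ v - (b : ℤ) ^ u)) * x) ∂μ)‖)) :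
    ∀ᵐ x ∂μ, UnifDistMod1 (fun n => x * (b : ℝ) ^ n) ∧ NormalToBase b x := by
  have hweyl : ∀ᵐ x ∂μ, UnifDistMod1 (fun n => x * (b : ℝ) ^ n) := by
    refine ae_all_iff.2 fun h => ?_
    by_cases hh : h = 0
    · exact ae_of_all _ fun x h0 => absurd hh h0
    have hφ : ∀ n, Measurable fun x : ℝ => h * (x * (b : ℝ) ^ n) := fun n => by fun_prop
    filter_upwards [ae_tendsto_weyl_average_of_summable μ hφ ((hsum h hh).congr fun N => by
      push_cast; ring_nf)] with x hx _
    simpa only [ofReal_mul, ofReal_intCast, mul_assoc] using hx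
  filter_upwards [hweyl] with x hx using ⟨hx, hx⟩

theorem davenport_erdos_leveque (μ : Measure ℝ) [IsProbabilityMeasure μ]
    (hsupp : μ (Set.Icc (0 : ℝ) 1)ᶜ = 0)
    (b : ℕ) (hb : 2 ≤ b)
    (hsum : ∀ h : ℤ, h ≠ 0 →
      Summable (fun N : ℕ => (N : ℝ) ^ (-(3 : ℤ)) *
        ∑ u ∈ Finset.Icc 1 N, ∑ v ∈ Finset.Icc 1 N,
          ‖(∫ x : ℝ, Complex.exp
            (2 * Real.pi * Complex.I * (h * ((b : ℤ) ^ v - (b : ℤ) ^ u)) * x) ∂μ)‖)) :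
    ∀ᵐ x ∂μ, UnifDistMod1 (fun n => x * (b : ℝ) ^ n) ∧ NormalToBase b x :=
  davenport_erdos_leveque_general μ b hsum
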